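/- arXiv:2502.19336 — 2 statements merged into one kernel-verified Lean document; each statement's English description precedes it below -/
import Mathlib

section
/- For every integer k ≥ 1, k! · 4^k · e^{1/25 - 1/6} / √(πk) ≤ (2k)!/k! ≤ k! · 4^k / √(πk). -/
/-!
Write `s n = n! / (√(2n) (n/e)^n)` for Mathlib's `stirlingSeq`, so that
`centralBinom k / 4^k = s (2k) / (s k ^ 2 √k)`. Since `s` decreases to `√π`, the upper bound
follows from `s (2k) ≤ s k` and `√π ≤ s k`. For the lower bound, Robbins' estimate
`log s n - log s (n+1) ≤ 1/(12n) - 1/(12(n+1))` telescopes to `log s k ≤ log √π + 1/(12k)` and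
`log s k - log s (2k) ≤ 1/(24k)`, whence `s k ^ 2 / s (2k) ≤ √π e^{1/(8k)}`; and `1/8 ≤ 1/6 - 1/25`.
-/

open Real Nat

theorem Nat.cast_centralBinom (k : ℕ) : (centralBinom k : ℝ) = (2 * k)! / k ! ^ 2 := by
  rw [centralBinom_eq_two_mul_choose, two_mul, cast_add_choose, sq]

namespace Stirling

open Filter Topology

theorem stirlingSeq_two_mul_div_sq (k : ℕ) :
    stirlingSeq (2 * k) / stirlingSeq k ^ 2 = centralBinom k / 4 ^ k * √k := by
  rcases eq_or_ne k 0 with rfl | hk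
  · simp
  have hsqrt : √(2 * (2 * k : ℝ)) = 2 * √k := by
    rw [← mul_assoc, sqrt_mul (by norm_num), show (2 * 2 : ℝ) = 2 ^ 2 by norm_num,
      sqrt_sq zero_le_two]
  have hpow : ((2 * k : ℝ) / exp 1) ^ (2 * k) = 4 ^ k * ((k / exp 1) ^ k) ^ 2 := by
    rw [mul_div_assoc, mul_pow, pow_mul]; norm_num; ring
  simp only [stirlingSeq, cast_centralBinom, cast_mul, cast_ofNat, hsqrt, hpow, div_pow,
    mul_pow, sq_sqrt (by positivity : (0 : ℝ) ≤ 2 * k)]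
  field_simp
  exact (sq_sqrt k.cast_nonneg).symm

theorem stirlingSeq_pos {n : ℕ} (hn : n ≠ 0) : 0 < stirlingSeq n :=
  (sqrt_pos.2 pi_pos).trans_le (sqrt_pi_le_stirlingSeq hn)

theorem stirlingSeq_le_of_le {k m : ℕ} (hk : k ≠ 0) (hkm : k ≤ m) :
    stirlingSeq m ≤ stirlingSeq k := by
  obtain ⟨k, rfl⟩ := exists_eq_succ_of_ne_zero hk
  obtain ⟨m, rfl⟩ := exists_eq_succ_of_ne_zero (by omega : m ≠ 0)
  exact stirlingSeq'_antitone (succ_le_succ_iff.mp hkm)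

theorem log_stirlingSeq_sub_le {k m : ℕ} (hk : k ≠ 0) (hkm : k ≤ m) :
    log (stirlingSeq k) - log (stirlingSeq m) ≤ 1 / (12 * k) - 1 / (12 * m) := by
  induction m, hkm using Nat.le_induction with
  | base => simp
  | succ m hkm ih =>
    have hm : (m : ℝ) ≠ 0 := by exact_mod_cast (by omega : m ≠ 0)
    have robbins := log_stirlingSeq_sdiff_le m
    have telescope : 1 / (12 * m * (m + 1) : ℝ) = 1 / (12 * m) - 1 / (12 * (m + 1)) := by
      field_simp; ring
    push_cast
    linarith

theorem log_stirlingSeq_le {k : ℕ} (hk : k ≠ 0) :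
    log (stirlingSeq k) ≤ log √π + 1 / (12 * k) := by
  have hlim : Tendsto (fun m ↦ log (stirlingSeq m)) atTop (𝓝 (log √π)) :=
    ((continuousAt_log (by positivity)).tendsto).comp tendsto_stirlingSeq_sqrt_pi
  suffices log (stirlingSeq k) - 1 / (12 * k) ≤ log √π by linarith
  refine ge_of_tendsto hlim (eventually_atTop.2 ⟨k, fun m hkm ↦ ?_⟩)
  have := log_stirlingSeq_sub_le hk hkm
  have : (0 : ℝ) ≤ 1 / (12 * m) := by positivity
  linarith

theorem stirlingSeq_sq_le {k : ℕ} (hk : k ≠ 0) :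
    stirlingSeq k ^ 2 ≤ √π * exp (1 / (8 * k)) * stirlingSeq (2 * k) := by
  have h2k := stirlingSeq_pos (by omega : 2 * k ≠ 0)
  have hπ : 0 < √π := sqrt_pos.2 pi_pos
  rw [← log_le_log_iff (pow_pos (stirlingSeq_pos hk) 2) (by positivity), Real.log_pow,
    log_mul (by positivity) h2k.ne', log_mul hπ.ne' (exp_pos _).ne', log_exp]
  have := log_stirlingSeq_le hk
  have := log_stirlingSeq_sub_le hk (by omega : k ≤ 2 * k)
  have : 1 / (12 * k) + (1 / (12 * k) - 1 / (12 * (2 * k : ℕ))) = (1 / (8 * k) : ℝ) := by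
    push_cast; field_simp; ring
  push_cast at *
  linarith

theorem stirlingSeq_two_mul_div_sq_le {k : ℕ} (hk : k ≠ 0) :
    stirlingSeq (2 * k) / stirlingSeq k ^ 2 ≤ 1 / √π := by
  have hπ := sqrt_pi_le_stirlingSeq hk
  have hπpos : 0 < √π := sqrt_pos.2 pi_pos
  rw [div_le_div_iff₀ (pow_pos (stirlingSeq_pos hk) 2) hπpos, one_mul, sq]
  exact mul_le_mul (stirlingSeq_le_of_le hk (by omega)) hπ hπpos.le (hπpos.le.trans hπ)

theorem exp_neg_div_le_stirlingSeq_two_mul_div_sq {k : ℕ} (hk : k ≠ 0) :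
    exp (-(1 / (8 * k))) / √π ≤ stirlingSeq (2 * k) / stirlingSeq k ^ 2 := by
  rw [div_le_div_iff₀ (sqrt_pos.2 pi_pos) (pow_pos (stirlingSeq_pos hk) 2), exp_neg,
    inv_mul_le_iff₀ (exp_pos _)]
  linarith [stirlingSeq_sq_le hk]

end Stirling

namespace Nat

open Stirling

theorem centralBinom_div_four_pow_eq {k : ℕ} (hk : k ≠ 0) :
    (centralBinom k : ℝ) / 4 ^ k = stirlingSeq (2 * k) / stirlingSeq k ^ 2 / √k := by
  rw [stirlingSeq_two_mul_div_sq, mul_div_cancel_right₀ _ (by positivity)]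

theorem centralBinom_div_four_pow_le {k : ℕ} (hk : k ≠ 0) :
    (centralBinom k : ℝ) / 4 ^ k ≤ 1 / √(π * k) := by
  rw [centralBinom_div_four_pow_eq hk, sqrt_mul pi_pos.le, ← div_div]
  exact div_le_div_of_nonneg_right (stirlingSeq_two_mul_div_sq_le hk) (sqrt_nonneg _)

theorem exp_neg_div_le_centralBinom_div_four_pow {k : ℕ} (hk : k ≠ 0) :
    exp (-(1 / (8 * k))) / √(π * k) ≤ (centralBinom k : ℝ) / 4 ^ k := by
  rw [centralBinom_div_four_pow_eq hk, sqrt_mul pi_pos.le, ← div_div]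
  exact div_le_div_of_nonneg_right (exp_neg_div_le_stirlingSeq_two_mul_div_sq hk) (sqrt_nonneg _)

end Nat

/-- For every integer `k ≥ 1`,
`k! · 4^k · e^{1/25 - 1/6} / √(πk) ≤ (2k)!/k! ≤ k! · 4^k / √(πk)`. -/
theorem factorial_ratio_stirling_bounds (k : ℕ) (hk : 1 ≤ k) :
    (k.factorial : ℝ) * 4 ^ k * Real.exp (1 / 25 - 1 / 6) / Real.sqrt (π * k)
        ≤ ((2 * k).factorial : ℝ) / (k.factorial : ℝ) ∧
      ((2 * k).factorial : ℝ) / (k.factorial : ℝ)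
        ≤ (k.factorial : ℝ) * 4 ^ k / Real.sqrt (π * k) := by
  have hk0 : k ≠ 0 := by omega
  have hratio : ((2 * k)! : ℝ) / k ! = k ! * 4 ^ k * (centralBinom k / 4 ^ k) := by
    rw [cast_centralBinom]
    field_simp
  have hexp : exp (1 / 25 - 1 / 6) ≤ exp (-(1 / (8 * k))) := by
    have : 1 / (8 * k : ℝ) ≤ 1 / 8 := by
      gcongr
      exact le_mul_of_one_le_right (by norm_num) (by exact_mod_cast hk)
    gcongr
    linarith
  have hfac : (0 : ℝ) ≤ k ! * 4 ^ k := by positivity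
  rw [hratio]
  constructor
  · calc _ = k ! * 4 ^ k * (exp (1 / 25 - 1 / 6) / √(π * k)) := mul_div_assoc _ _ _
      _ ≤ k ! * 4 ^ k * (exp (-(1 / (8 * k))) / √(π * k)) := by gcongr
      _ ≤ _ := mul_le_mul_of_nonneg_left (exp_neg_div_le_centralBinom_div_four_pow hk0) hfac
  · calc _ ≤ k ! * 4 ^ k * (1 / √(π * k)) :=
          mul_le_mul_of_nonneg_left (centralBinom_div_four_pow_le hk0) hfac
      _ = _ := mul_one_div _ _
end

section
/- Let B be an N×N real symmetric positive definite matrix with maximal entry b_max > 0, let K ≥ 1 (possibly infinite), and suppose coefficients a_I ≥ 0 indexed by N-tuples satisfy ∑_{|I|=2k} a_I² I! ≤ c · k^q · γ^k / (2k)! for all 1 ≤ k ≤ K, with γ b_max² < 1 if K = ∞. Then the quantity Q = a_0² + ∑_{k=1}^K ∑_{|I|=2k} a_I² I! Haf(B_I)² satisfies Q ≤ a_0² + (c/√π) · Li_{1/2−q, K}(γ b_max²), where Li_{s,K}(z) = ∑_{k=1}^K z^k/k^s is the truncated polylogarithm. -/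
open scoped Classical
open Real

/-- The hafnian of an `n × n` real matrix (`0` when `n` is odd, `1` for the empty matrix). -/
noncomputable def hafnian {n : ℕ} (M : Matrix (Fin n) (Fin n) ℝ) : ℝ :=
  if Even n then
    (1 / ((n / 2).factorial * 2 ^ (n / 2) : ℝ)) *
      ∑ σ : Equiv.Perm (Fin n), ∏ j : Fin (n / 2),
        M (σ ⟨2 * j.1, by have := j.2; omega⟩) (σ ⟨2 * j.1 + 1, by have := j.2; omega⟩)
  else 0

/-- An equivalence `(Σ n, Fin (I n)) ≃ Fin (∑ n, I n)` used to index repeated rows/columns. -/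
noncomputable def sigmaFinEquiv {N : ℕ} (I : Fin N → ℕ) :
    (Σ n : Fin N, Fin (I n)) ≃ Fin (∑ n, I n) :=
  Fintype.equivFinOfCardEq (by simp)

/-- The matrix `B_I` obtained from `B` by repeating row/column `n` exactly `I n` times. -/
noncomputable def repMat {N : ℕ} (B : Matrix (Fin N) (Fin N) ℝ) (I : Fin N → ℕ) :
    Matrix (Fin (∑ n, I n)) (Fin (∑ n, I n)) ℝ :=
  fun a b => B ((sigmaFinEquiv I).symm a).1 ((sigmaFinEquiv I).symm b).1

/-- The truncated polylogarithm `Li_{s,K}(z) = ∑_{1 ≤ k ≤ K} z^k / k^s` (`K ∈ ℕ∞`). -/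
noncomputable def polylog (s : ℝ) (K : ℕ∞) (z : ℝ) : ℝ :=
  ∑' k : ℕ, if 1 ≤ k ∧ (k : ℕ∞) ≤ K then z ^ k / (k : ℝ) ^ s else 0

/-!
Every entry of a positive semidefinite matrix is bounded in absolute value by the largest entry
(test the form on `e_i + e_j`), and `Haf(B_I)` for `|I| = 2k` is `(2k)!/(2^k k!)` times an
average of products of `k` entries, so `Haf(B_I)² ≤ (b_max^k (2k)!/(2^k k!))²`. With the decay
hypothesis, the `k`-th term of `Q` is then at most `c k^q (γ b_max²)^k (2k)!/(4^k (k!)²)`, and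
Wallis' product bounds the central binomial ratio `(2k)!/(4^k (k!)²)` by `1/√(πk)`. Summing
against the truncated polylogarithm, which converges for `K = ∞` as `0 ≤ γ b_max² < 1`, gives
the bound.
-/

open Finset
open scoped Nat

theorem Matrix.PosSemidef.abs_apply_le {n : Type*} [Fintype n] [DecidableEq n] {B : Matrix n n ℝ}
    (hB : B.PosSemidef) {b : ℝ} (hb : ∀ i j, B i j ≤ b) (i j : n) : |B i j| ≤ b := by
  have hform := hB.dotProduct_mulVec_nonneg (Pi.single i 1 + Pi.single j 1)
  have hsymm : B j i = B i j := hB.1.apply i j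
  simp only [star_trivial, Matrix.mulVec_add, Matrix.mulVec_single_one, add_dotProduct,
    dotProduct_add, single_one_dotProduct, Matrix.col_apply, hsymm] at hform
  rw [abs_le]
  constructor <;> linarith [hb i i, hb j j, hb i j]

theorem abs_hafnian_le {n : ℕ} (M : Matrix (Fin n) (Fin n) ℝ) {b : ℝ} (hb : 0 ≤ b)
    (hM : ∀ i j, |M i j| ≤ b) :
    |hafnian M| ≤ b ^ (n / 2) * (n ! / ((n / 2)! * 2 ^ (n / 2))) := by
  unfold hafnian
  split_ifs
  · have hterm : ∀ σ : Equiv.Perm (Fin n), |∏ j : Fin (n / 2),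
        M (σ ⟨2 * j.1, by have := j.2; omega⟩) (σ ⟨2 * j.1 + 1, by have := j.2; omega⟩)| ≤
        b ^ (n / 2) := fun σ => by
      rw [abs_prod]
      calc _ ≤ ∏ _j : Fin (n / 2), b := prod_le_prod (fun _ _ => abs_nonneg _) fun _ _ => hM _ _
        _ = b ^ (n / 2) := by rw [prod_const, Finset.card_fin]
    have hsum := (abs_sum_le_sum_abs _ _).trans (sum_le_sum fun σ (_ : σ ∈ univ) => hterm σ)
    rw [sum_const, Finset.card_univ, Fintype.card_perm, Fintype.card_fin, nsmul_eq_mul] at hsum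
    rw [abs_mul, abs_of_nonneg (by positivity)]
    calc _ ≤ 1 / ((n / 2)! * 2 ^ (n / 2) : ℝ) * (n ! * b ^ (n / 2)) := by gcongr
      _ = _ := by ring
  · rw [abs_zero]
    positivity

/-- Wallis: `W k = 1 / ((2k + 1) r²)` for the ratio `r` on the left, and
`W k ≥ (2k + 1) / (2k + 2) · π / 2`. -/
theorem factorial_two_mul_div_four_pow_le {k : ℕ} (hk : k ≠ 0) :
    ((2 * k)! : ℝ) / (4 ^ k * (k ! : ℝ) ^ 2) ≤ 1 / √(π * k) := by
  have hW := Wallis.le_W k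
  rw [Wallis.W_eq_factorial_ratio, show (2 : ℝ) ^ (4 * k) = (4 ^ k) ^ 2 by
    rw [← pow_mul, show (4 : ℝ) = 2 ^ 2 by norm_num, ← pow_mul]; ring_nf] at hW
  set F : ℝ := ↑(2 * k)!
  set G : ℝ := 4 ^ k * (↑k ! : ℝ) ^ 2
  have hk1 : (1 : ℝ) ≤ k := by exact_mod_cast Nat.one_le_iff_ne_zero.mpr hk
  have hW' : (2 * k + 1) ^ 2 * π * F ^ 2 ≤ 2 * (2 * k + 2) * G ^ 2 := by
    rw [div_mul_eq_mul_div, div_le_div_iff₀ (by positivity) (by positivity)] at hW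
    linear_combination 2 * hW
  rw [one_div, ← sqrt_inv, le_sqrt (by positivity) (by positivity), div_pow, ← one_div,
    div_le_div_iff₀ (by positivity) (by positivity)]
  have hk_sq : k * (2 * (2 * k + 2)) ≤ ((2 : ℝ) * k + 1) ^ 2 := by nlinarith
  have hscaled : ((2 : ℝ) * k + 1) ^ 2 * (F ^ 2 * (π * k)) ≤ (2 * k + 1) ^ 2 * (1 * G ^ 2) := by
    nlinarith [mul_le_mul_of_nonneg_left hW' (by positivity : (0 : ℝ) ≤ k),
      mul_le_mul_of_nonneg_right hk_sq (sq_nonneg G)]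
  exact le_of_mul_le_mul_left hscaled (by positivity)

theorem sq_hafnian_repMat_le {N k : ℕ} {B : Matrix (Fin N) (Fin N) ℝ} (hB : B.PosSemidef)
    {b : ℝ} (hb : 0 ≤ b) (hub : ∀ i j, B i j ≤ b) {I : Fin N → ℕ} (hI : ∑ n, I n = 2 * k) :
    hafnian (repMat B I) ^ 2 ≤ (b ^ k * ((2 * k)! / (k ! * 2 ^ k))) ^ 2 := by
  have h := abs_hafnian_le (repMat B I) hb fun _ _ => hB.abs_apply_le hub _ _
  rw [← sq_abs]
  gcongr
  exact h.trans_eq (by rw [hI, Nat.mul_div_cancel_left k two_pos])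

theorem sum_mul_sq_hafnian_repMat_le {N : ℕ} {B : Matrix (Fin N) (Fin N) ℝ} (hB : B.PosSemidef)
    {b : ℝ} (hb : 0 ≤ b) (hub : ∀ i j, B i j ≤ b) (w : (Fin N → ℕ) → ℝ) (hw : ∀ I, 0 ≤ w I)
    (k : ℕ) :
    ∑ I ∈ Nat.antidiagonalTuple N (2 * k), w I * hafnian (repMat B I) ^ 2 ≤
      (∑ I ∈ Nat.antidiagonalTuple N (2 * k), w I) * (b ^ k * ((2 * k)! / (k ! * 2 ^ k))) ^ 2 := by
  rw [sum_mul]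
  exact sum_le_sum fun I hI => mul_le_mul_of_nonneg_left
    (sq_hafnian_repMat_le hB hb hub (Nat.mem_antidiagonalTuple.mp hI)) (hw I)

theorem decay_mul_sq_hafnian_bound_le {c q γ b : ℝ} (hc : 0 ≤ c) (hγ : 0 ≤ γ) {k : ℕ}
    (hk : k ≠ 0) :
    c * (k : ℝ) ^ q * γ ^ k / (2 * k)! * (b ^ k * ((2 * k)! / (k ! * 2 ^ k))) ^ 2 ≤
      c / √π * ((γ * b ^ 2) ^ k / (k : ℝ) ^ (1 / 2 - q)) := by
  have hk0 : (0 : ℝ) < k := by exact_mod_cast Nat.pos_of_ne_zero hk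
  calc _ = c * (k : ℝ) ^ q * (γ * b ^ 2) ^ k * ((2 * k)! / (4 ^ k * (k ! : ℝ) ^ 2)) := by
        rw [show (4 : ℝ) ^ k = (2 ^ k) ^ 2 by rw [← pow_mul, mul_comm, pow_mul]; norm_num]
        field_simp
        ring
    _ ≤ c * (k : ℝ) ^ q * (γ * b ^ 2) ^ k * (1 / √(π * k)) :=
        mul_le_mul_of_nonneg_left (factorial_two_mul_div_four_pow_le hk) (by positivity)
    _ = _ := by
        rw [rpow_sub hk0, ← sqrt_eq_rpow, sqrt_mul pi_pos.le]
        field_simp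

theorem summable_polylog_summand {s z : ℝ} {K : ℕ∞} (hz : K = ⊤ → |z| < 1) :
    Summable fun k : ℕ => if 1 ≤ k ∧ (k : ℕ∞) ≤ K then z ^ k / (k : ℝ) ^ s else 0 := by
  rcases eq_or_ne K ⊤ with rfl | hK
  · have hgeom := summable_pow_mul_geometric_of_norm_lt_one ⌈-s⌉₊ (r := |z|) (by simpa using hz rfl)
    refine hgeom.of_norm_bounded fun k => ?_
    split_ifs with hk
    · have hk1 : (1 : ℝ) ≤ k := by exact_mod_cast hk.1
      rw [norm_div, norm_pow, Real.norm_eq_abs, Real.norm_of_nonneg (by positivity),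
        div_eq_mul_inv, ← rpow_neg (by positivity), mul_comm, ← rpow_natCast (k : ℝ) ⌈-s⌉₊]
      exact mul_le_mul_of_nonneg_right (rpow_le_rpow_of_exponent_le hk1 (Nat.le_ceil _))
        (by positivity)
    · rw [norm_zero]
      positivity
  · lift K to ℕ using hK
    refine summable_of_ne_finset_zero (s := range (K + 1)) fun k hk => if_neg ?_
    rintro ⟨-, hkK⟩
    rw [mem_range, Nat.cast_le] at *
    omega

theorem tsum_ite_le_mul_polylog {K : ℕ∞} {s z C : ℝ} (hz : K = ⊤ → |z| < 1)
    (u : ℕ → ℝ) (hu_nonneg : ∀ k, 0 ≤ u k)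
    (hu : ∀ k : ℕ, 1 ≤ k → (k : ℕ∞) ≤ K → u k ≤ C * (z ^ k / (k : ℝ) ^ s)) :
    ∑' k : ℕ, (if 1 ≤ k ∧ (k : ℕ∞) ≤ K then u k else 0) ≤ C * polylog s K z := by
  have hg := (summable_polylog_summand (s := s) hz).mul_left C
  have hle : ∀ k : ℕ, (if 1 ≤ k ∧ (k : ℕ∞) ≤ K then u k else 0) ≤
      C * if 1 ≤ k ∧ (k : ℕ∞) ≤ K then z ^ k / (k : ℝ) ^ s else 0 := fun k => by
    split_ifs with hk
    exacts [hu k hk.1 hk.2, (mul_zero C).ge]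
  rw [polylog, ← tsum_mul_left]
  exact (Summable.of_nonneg_of_le (fun k => by split_ifs <;> simp [hu_nonneg]) hle hg).tsum_le_tsum
    hle hg

theorem gbs_importance_second_moment_bound_general (N : ℕ)
    (B : Matrix (Fin N) (Fin N) ℝ) (hB : B.PosDef)
    (bmax : ℝ) (hbmax_pos : 0 < bmax) (hbmax_ub : ∀ i j, B i j ≤ bmax)
    (K : ℕ∞) (hK : 1 ≤ K)
    (a : (Fin N → ℕ) → ℝ)
    (c q γ : ℝ) (hc : 0 < c)
    (hbound : ∀ k : ℕ, 1 ≤ k → (k : ℕ∞) ≤ K →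
      ∑ I ∈ Finset.Nat.antidiagonalTuple N (2 * k),
          (a I) ^ 2 * ∏ n, ((I n).factorial : ℝ)
        ≤ c * (k : ℝ) ^ q * γ ^ k / ((2 * k).factorial : ℝ))
    (hconv : K = ⊤ → γ * bmax ^ 2 < 1) :
    (a (fun _ => 0)) ^ 2
        + ∑' k : ℕ, (if 1 ≤ k ∧ (k : ℕ∞) ≤ K then
            ∑ I ∈ Finset.Nat.antidiagonalTuple N (2 * k),
              (a I) ^ 2 * (∏ n, ((I n).factorial : ℝ)) * (hafnian (repMat B I)) ^ 2
          else 0)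
      ≤ (a (fun _ => 0)) ^ 2 + (c / Real.sqrt π) * polylog (1 / 2 - q) K (γ * bmax ^ 2) := by
  have hγ : 0 ≤ γ := by
    have h : 0 ≤ c * γ / 2 := by
      simpa using (sum_nonneg fun I _ => by positivity).trans
        (hbound 1 le_rfl (by exact_mod_cast hK))
    exact nonneg_of_mul_nonneg_right (by linarith) hc
  have hz : K = ⊤ → |γ * bmax ^ 2| < 1 := fun hK => by
    rw [abs_of_nonneg (by positivity)]
    exact hconv hK
  refine add_le_add_right (tsum_ite_le_mul_polylog hz _ (fun k => by positivity)
    fun k hk hkK => ?_) _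
  calc _ ≤ _ := sum_mul_sq_hafnian_repMat_le hB.posSemidef hbmax_pos.le hbmax_ub _
        (fun I => by positivity) k
    _ ≤ _ := mul_le_mul_of_nonneg_right (hbound k hk hkK) (sq_nonneg _)
    _ ≤ _ := decay_mul_sq_hafnian_bound_le hc.le hγ (by omega)

/-- Under the coefficient decay hypothesis `∑_{|I|=2k} a_I² I! ≤ c k^q γ^k/(2k)!`
(for `1 ≤ k ≤ K`, with `γ b_max² < 1` when `K = ∞`), the quantity
`Q = a_0² + ∑_{k=1}^K ∑_{|I|=2k} a_I² I! Haf(B_I)²` satisfies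
`Q ≤ a_0² + (c/√π) Li_{1/2-q,K}(γ b_max²)`. -/
theorem gbs_importance_second_moment_bound (N : ℕ) (hN : 0 < N)
    (B : Matrix (Fin N) (Fin N) ℝ) (hB : B.PosDef)
    (bmax : ℝ) (hbmax_pos : 0 < bmax) (hbmax_ub : ∀ i j, B i j ≤ bmax)
    (hbmax_mem : ∃ i j, B i j = bmax)
    (K : ℕ∞) (hK : 1 ≤ K)
    (a : (Fin N → ℕ) → ℝ) (ha : ∀ I, 0 ≤ a I)
    (c q γ : ℝ) (hc : 0 < c)
    (hbound : ∀ k : ℕ, 1 ≤ k → (k : ℕ∞) ≤ K →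
      ∑ I ∈ Finset.Nat.antidiagonalTuple N (2 * k),
          (a I) ^ 2 * ∏ n, ((I n).factorial : ℝ)
        ≤ c * (k : ℝ) ^ q * γ ^ k / ((2 * k).factorial : ℝ))
    (hconv : K = ⊤ → γ * bmax ^ 2 < 1) :
    (a (fun _ => 0)) ^ 2
        + ∑' k : ℕ, (if 1 ≤ k ∧ (k : ℕ∞) ≤ K then
            ∑ I ∈ Finset.Nat.antidiagonalTuple N (2 * k),
              (a I) ^ 2 * (∏ n, ((I n).factorial : ℝ)) * (hafnian (repMat B I)) ^ 2
          else 0)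
      ≤ (a (fun _ => 0)) ^ 2 + (c / Real.sqrt π) * polylog (1 / 2 - q) K (γ * bmax ^ 2) :=
  gbs_importance_second_moment_bound_general N B hB bmax hbmax_pos hbmax_ub K hK a c q γ hc hbound
    hconv
end
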